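/- Let K ≥ 1 be an integer and let M be any n×n real matrix. For any real coefficients θ_0, θ_1, …, θ_K there exist real numbers α_1, …, α_K and β_1, …, β_K such that, setting β_0 = 1, one has Σ_{i=0}^{K} θ_i M^i = β_K·I + Σ_{i=1}^{K} (Π_{j=i}^{K} α_j)·β_{i−1}·M^{K−i+1}. In other words, every matrix polynomial of order K in M can be represented by the stacked-filter form β_K I + Σ_{i=1}^{K} (Π_{j=i}^{K} α_j) β_{i−1} M^{K−i+1}. -/
import Mathlib


/-- **Proposition 1 (stacked filter expressivity).**
Any polynomial of order `K` in a square matrix `M` can be represented in the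
stacked-filter form `β_K I + ∑_{i=1}^{K} (∏_{j=i}^{K} α_j) β_{i-1} M^{K-i+1}`
with the convention `β 0 = 1`. -/
theorem stacked_filter_represents_any_polynomial
    {n : ℕ} (K : ℕ) (hK : 1 ≤ K)
    (M : Matrix (Fin n) (Fin n) ℝ) (θ : ℕ → ℝ) :
    ∃ α β : ℕ → ℝ, β 0 = 1 ∧
      ∑ i ∈ Finset.range (K + 1), θ i • M ^ i =
        β K • (1 : Matrix (Fin n) (Fin n) ℝ) +
          ∑ i ∈ Finset.Icc 1 K,
            ((∏ j ∈ Finset.Icc i K, α j) * β (i - 1)) • M ^ (K - i + 1) := by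
  classical
  set α : ℕ → ℝ := fun j => if j = 1 then θ K else 1 with hα
  set β : ℕ → ℝ := fun i => if i = 0 then 1 else if i = K then θ 0 else θ (K - i) with hβ
  refine ⟨α, β, by simp [hβ], ?_⟩
  have hβK : β K = θ 0 := by
    show (if K = 0 then (1:ℝ) else if K = K then θ 0 else θ (K - K)) = θ 0
    rw [if_neg (by omega : K ≠ 0), if_pos rfl]
  have hcoef : ∀ i ∈ Finset.Icc 1 K,
      (∏ j ∈ Finset.Icc i K, α j) * β (i - 1) = θ (K - i + 1) := by
    intro i hi
    simp only [Finset.mem_Icc] at hi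
    rcases eq_or_lt_of_le hi.1 with h1 | h1
    · subst h1
      have hprod : (∏ j ∈ Finset.Icc 1 K, α j) = θ K := by
        rw [Finset.prod_eq_single_of_mem 1 (by simp [hK])]
        · simp [hα]
        · intro b _ hb; simp [hα, hb]
      have : K - 1 + 1 = K := by omega
      simp [hprod, hβ, this]
    · have hprod : (∏ j ∈ Finset.Icc i K, α j) = 1 := by
        apply Finset.prod_eq_one
        intro j hj
        simp only [Finset.mem_Icc] at hj
        rw [hα]; exact if_neg (by omega)
      have h1' : i - 1 ≠ 0 := by omega
      have h2' : i - 1 ≠ K := by omega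
      have h3' : K - (i - 1) = K - i + 1 := by omega
      simp [hprod, hβ, h1', h2', h3']
  have hsum : ∑ i ∈ Finset.Icc 1 K,
      ((∏ j ∈ Finset.Icc i K, α j) * β (i - 1)) • M ^ (K - i + 1)
      = ∑ i ∈ Finset.Icc 1 K, θ (K - i + 1) • M ^ (K - i + 1) :=
    Finset.sum_congr rfl fun i hi => by rw [hcoef i hi]
  have hre : ∑ i ∈ Finset.Icc 1 K, θ (K - i + 1) • M ^ (K - i + 1)
      = ∑ i ∈ Finset.Icc 1 K, θ i • M ^ i := by
    apply Finset.sum_nbij' (fun i => K - i + 1) (fun i => K - i + 1)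
    · intro a ha; simp only [Finset.mem_Icc] at *; omega
    · intro a ha; simp only [Finset.mem_Icc] at *; omega
    · intro a ha; simp only [Finset.mem_Icc] at ha; omega
    · intro a ha; simp only [Finset.mem_Icc] at ha; omega
    · intro a ha; rfl
  rw [hsum, hre, hβK]
  have hrange : Finset.range (K + 1) = insert 0 (Finset.Icc 1 K) := by
    ext x; simp [Finset.mem_Icc]; omega
  rw [hrange, Finset.sum_insert (by simp)]
  simp
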